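/- The map R₃ : (q₁, p₁, q₂, p₂) ↦ (1/q₁, −((p₁ − q₁² − p₂)q₁ − (q₁+q₂)p₂ + α₁)q₁, −p₂/q₁, q₁(q₁+q₂)) is symplectic: it preserves the 2-form dq₁∧dp₁ + dq₂∧dp₂, i.e. dx₃∧dy₃ + dz₃∧dw₃ = dq₁∧dp₁ + dq₂∧dp₂ on the open set q₁ ≠ 0. -/
import Mathlib

open Matrix

/-- Standard symplectic matrix pairing (q₁,p₁) and (q₂,p₂). -/
def Omega : Matrix (Fin 4) (Fin 4) ℂ :=
  !![0, 1, 0, 0; -1, 0, 0, 0; 0, 0, 0, 1; 0, 0, -1, 0]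

/-- Jacobian of R₃ : (q₁,p₁,q₂,p₂) ↦
(1/q₁, −((p₁−q₁²−p₂)q₁ − (q₁+q₂)p₂ + α₁)q₁, −p₂/q₁, q₁(q₁+q₂)),
rows = components of R₃, columns = ∂/∂q₁, ∂/∂p₁, ∂/∂q₂, ∂/∂p₂. -/
noncomputable def JacR3 (α₁ q₁ p₁ q₂ p₂ : ℂ) : Matrix (Fin 4) (Fin 4) ℂ :=
  !![-1 / q₁ ^ 2, 0, 0, 0;
     -2 * p₁ * q₁ + 4 * q₁ ^ 3 + 4 * p₂ * q₁ + q₂ * p₂ - α₁, -q₁ ^ 2, p₂ * q₁,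
       2 * q₁ ^ 2 + q₂ * q₁;
     p₂ / q₁ ^ 2, 0, 0, -1 / q₁;
     2 * q₁ + q₂, 0, q₁, 0]

/-- R₃ is symplectic: JᵀΩJ = Ω on q₁ ≠ 0. -/
theorem R3_symplectic (α₁ q₁ p₁ q₂ p₂ : ℂ) (hq₁ : q₁ ≠ 0) :
    (JacR3 α₁ q₁ p₁ q₂ p₂)ᵀ * Omega * JacR3 α₁ q₁ p₁ q₂ p₂ = Omega := by
  ext i j
  fin_cases i <;> fin_cases j <;>
    simp [JacR3, Omega, Matrix.mul_apply, Fin.sum_univ_succ, Matrix.vecHead,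
      Matrix.vecTail] <;>
    (try field_simp) <;> ring
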